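/- Tarski fixed-point theorem for Ω-categories (closure under tensors and joins of prefixed points): Let A be a complete Ω-lattice and f : A → A an Ω-functor. Then the set M = {x ∈ A : x ≤ f(x)} (with ≤ the underlying order, x ≤ y iff I ≤ A(x,y)) is closed under arbitrary joins of A₀ and under tensors: for all α ∈ Ω and x ∈ M, α ⊗ x ∈ M. -/
import Mathlib


/-- A commutative unital quantale: a complete lattice with a commutative
monoid structure whose multiplication distributes over arbitrary joins. -/
class CommQuantale (Q : Type*) extends CompleteLattice Q, CommMonoid Q where
  mul_sSup : ∀ (a : Q) (s : Set Q), a * sSup s = ⨆ b ∈ s, a * b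

/-- The residuation `a → b = ⋁ {c | a * c ≤ b}`. -/
def qres {Q : Type*} [CommQuantale Q] (a b : Q) : Q := sSup {c | a * c ≤ b}

lemma qmul_mono_right {Q : Type*} [CommQuantale Q] (a : Q) {b c : Q} (h : b ≤ c) :
    a * b ≤ a * c := by
  have h1 : sSup {b, c} = c := by
    rw [sSup_pair]; exact sup_eq_right.mpr h
  have := CommQuantale.mul_sSup a {b, c}
  rw [h1] at this
  rw [this]
  exact le_biSup (fun x => a * x) (by simp)

lemma qmul_qres_le {Q : Type*} [CommQuantale Q] (a b : Q) : a * qres a b ≤ b := by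
  rw [qres, CommQuantale.mul_sSup]
  exact iSup₂_le fun c hc => hc

lemma one_le_qres {Q : Type*} [CommQuantale Q] {a b : Q} (h : a ≤ b) :
    (1 : Q) ≤ qres a b := le_sSup (by simpa using h)

/-- Tarski fixed-point theorem (key step): the prefixed points of an Ω-functor
on a complete Ω-lattice are closed under arbitrary joins and under tensors. -/
theorem prefixed_points_closed {Q : Type*} [CommQuantale Q]
    {A : Type*} (hom : A → A → Q)
    (hrefl : ∀ a : A, (1 : Q) ≤ hom a a)
    (htrans : ∀ a b c : A, hom a b * hom b c ≤ hom a c)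
    (hanti : ∀ a b : A, (1 : Q) ≤ hom a b → (1 : Q) ≤ hom b a → a = b)
    (ten : Q → A → A)
    (hten : ∀ (α : Q) (x y : A), hom (ten α x) y = qres α (hom x y))
    (coten : Q → A → A)
    (hcoten : ∀ (α : Q) (z y : A), hom z (coten α y) = qres α (hom z y))
    -- the underlying poset is a complete lattice: arbitrary joins exist
    (Sup0 : Set A → A)
    (hSup0 : ∀ (s : Set A) (x : A),
      (1 : Q) ≤ hom (Sup0 s) x ↔ ∀ y ∈ s, (1 : Q) ≤ hom y x)
    (f : A → A) (hf : ∀ a b : A, hom a b ≤ hom (f a) (f b)) :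
    (∀ s : Set A, (∀ y ∈ s, (1 : Q) ≤ hom y (f y)) →
      (1 : Q) ≤ hom (Sup0 s) (f (Sup0 s))) ∧
    (∀ (α : Q) (x : A), (1 : Q) ≤ hom x (f x) →
      (1 : Q) ≤ hom (ten α x) (f (ten α x))) := by
  have mul_mono : ∀ {a b c d : Q}, a ≤ b → c ≤ d → a * c ≤ b * d := by
    intro a b c d hab hcd
    calc a * c ≤ a * d := qmul_mono_right a hcd
    _ = d * a := mul_comm a d
    _ ≤ d * b := qmul_mono_right d hab
    _ = b * d := mul_comm d b
  constructor
  · intro s hs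
    rw [hSup0]
    intro y hy
    have h1 : (1 : Q) ≤ hom y (Sup0 s) := (hSup0 s (Sup0 s)).mp (hrefl _) y hy
    calc (1 : Q) = 1 * 1 := (one_mul 1).symm
      _ ≤ hom y (f y) * hom (f y) (f (Sup0 s)) :=
        mul_mono (hs y hy) (le_trans h1 (hf _ _))
      _ ≤ hom y (f (Sup0 s)) := htrans _ _ _
  · intro α x hx
    have h1 : α ≤ hom x (ten α x) := by
      have h2 : (1 : Q) ≤ qres α (hom x (ten α x)) := by
        rw [← hten]; exact hrefl _
      calc α = α * 1 := (mul_one α).symm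
        _ ≤ α * qres α (hom x (ten α x)) := qmul_mono_right α h2
        _ ≤ hom x (ten α x) := qmul_qres_le _ _
    rw [hten]
    apply one_le_qres
    calc α ≤ 1 * hom x (ten α x) := by rwa [one_mul]
      _ ≤ hom x (f x) * hom (f x) (f (ten α x)) := mul_mono hx (hf _ _)
      _ ≤ hom x (f (ten α x)) := htrans _ _ _
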